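/- arXiv:2301.05000 — 3 statements merged into one kernel-verified Lean document; each statement's English description precedes it below -/
import Mathlib

section
/- Suppose a group G acts on a set X. Let g, h ∈ G, let x_0, x_1, …, x_t ∈ X, and let r, s ≥ 0 be integers with gcd(r,s) = 1 and r + s ≤ t such that g·x_i = x_{i+r} for all 0 ≤ i ≤ t − r and h·x_i = x_{i+s} for all 0 ≤ i ≤ t − s. Let H be the stabilizer of x_0 in G and assume H is malnormal in G. Then either g, h ∈ H (and hence x_0 = x_1 = ⋯ = x_t), or there exists d ∈ G such that g = d^r and h = d^s. -/
/-- A subgroup `H` of `G` is malnormal if `x H x⁻¹ ∩ H = {1}` for every `x ∉ H`. -/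
def Subgroup.Malnormal {G : Type*} [Group G] (H : Subgroup G) : Prop :=
  ∀ x : G, x ∉ H → ∀ g : G, g ∈ H → x * g * x⁻¹ ∈ H → g = 1

/-!
Euclid's algorithm on `(r, s)`: if `r ≤ s`, then `g⁻¹ * h` shifts `x 0, …, x (t - r)` by `s - r`,
so induction on `r + s` reduces everything to `(r, s) = (0, 1)`. There `g` fixes both `x 0` and
`x 1 = h • x 0`, so it lies in `H ∩ h H h⁻¹`, which malnormality makes trivial unless `h ∈ H`.
-/

open MulAction

section

variable {G X : Type*} [Group G] [MulAction G X]

theorem Subgroup.Malnormal.eq_one_of_mem_stabilizer_smul {a : X}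
    (hmal : (stabilizer G a).Malnormal) {g h : G} (hh : h ∉ stabilizer G a)
    (hg : g ∈ stabilizer G a) (hgh : g ∈ stabilizer G (h • a)) : g = 1 := by
  refine hmal h⁻¹ (by simpa using hh) g hg ?_
  rw [mem_stabilizer_iff] at hgh ⊢
  rw [inv_inv, mul_smul, mul_smul, hgh, inv_smul_smul]

def IsShift (g : G) (x : ℕ → X) (r t : ℕ) : Prop :=
  ∀ i, i ≤ t - r → g • x i = x (i + r)

variable {g h : G} {x : ℕ → X} {r s t : ℕ}

theorem IsShift.mono {t' : ℕ} (hg : IsShift g x r t) (ht : t' ≤ t) : IsShift g x r t' :=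
  fun i hi => hg i (by omega)

theorem IsShift.inv_mul (hg : IsShift g x r t) (hh : IsShift h x s t) (hrs : r ≤ s)
    (hst : s ≤ t) :
    IsShift (g⁻¹ * h) x (s - r) (t - r) := by
  intro i hi
  rw [mul_smul, hh i (by omega), inv_smul_eq_iff, hg (i + (s - r)) (by omega)]
  congr 1
  omega

theorem IsShift.forall_eq_of_smul_eq (hg : IsShift g x 1 t) (hg₀ : g • x 0 = x 0) :
    ∀ i ≤ t, x i = x 0
  | 0, _ => rfl
  | i + 1, hi => by rw [← hg i (by omega), hg.forall_eq_of_smul_eq hg₀ i (by omega), hg₀]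

theorem IsShift.forall_eq_of_forall_eq (hg : IsShift g x r t) (hg₀ : g • x 0 = x 0)
    (hrt : r ≤ t - r) (hx : ∀ i ≤ t - r, x i = x 0) : ∀ i ≤ t, x i = x 0 := by
  intro i hi
  rcases le_or_gt i (t - r) with hi' | hi'
  · exact hx i hi'
  · rw [← Nat.sub_add_cancel (show r ≤ i by omega), ← hg (i - r) (by omega),
      hx (i - r) (by omega), hg₀]

theorem IsShift.mem_stabilizer_or_eq_one (hmal : (stabilizer G (x 0)).Malnormal)
    (hg : IsShift g x 0 t) (hh : IsShift h x 1 t) (ht : 1 ≤ t) :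
    (g ∈ stabilizer G (x 0) ∧ h ∈ stabilizer G (x 0) ∧ ∀ i ≤ t, x i = x 0) ∨ g = 1 := by
  have hgH : g ∈ stabilizer G (x 0) := hg 0 (Nat.zero_le _)
  by_cases hhH : h ∈ stabilizer G (x 0)
  · exact .inl ⟨hgH, hhH, hh.forall_eq_of_smul_eq hhH⟩
  · refine .inr (hmal.eq_one_of_mem_stabilizer_smul hhH hgH ?_)
    show g • h • x 0 = h • x 0
    rw [hh 0 (by omega)]
    exact hg 1 (by omega)

end

/-- Suppose a group `G` acts on a set `X`, `g, h ∈ G`, `x_0, …, x_t ∈ X`, `gcd(r,s) = 1`,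
`r + s ≤ t`, `g • x_i = x_{i+r}` for `0 ≤ i ≤ t - r` and `h • x_i = x_{i+s}` for
`0 ≤ i ≤ t - s`.  If the stabilizer `H` of `x_0` is malnormal in `G`, then either
`g, h ∈ H` (and hence `x_0 = x_1 = ⋯ = x_t`), or there is `d ∈ G` with `g = d^r`, `h = d^s`. -/
theorem overlapping_by_action {G : Type*} [Group G] {X : Type*} [MulAction G X]
    (g h : G) (t r s : ℕ) (x : ℕ → X)
    (hgcd : Nat.gcd r s = 1) (hrst : r + s ≤ t)
    (hg : ∀ i, i ≤ t - r → g • x i = x (i + r))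
    (hh : ∀ i, i ≤ t - s → h • x i = x (i + s))
    (hmal : (MulAction.stabilizer G (x 0)).Malnormal) :
    (g ∈ MulAction.stabilizer G (x 0) ∧ h ∈ MulAction.stabilizer G (x 0) ∧
        ∀ i, i ≤ t → x i = x 0) ∨
      ∃ d : G, g = d ^ r ∧ h = d ^ s := by
  obtain ⟨n, hn⟩ : ∃ n, r + s = n := ⟨_, rfl⟩
  induction n using Nat.strong_induction_on generalizing g h t r s with
  | _ n ih =>
  wlog hrs : r ≤ s generalizing g h r s
  · exact (this h g s r (by rwa [Nat.gcd_comm]) (by omega) hh hg (by omega) (by omega)).imp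
      (fun ⟨hhH, hgH, hx⟩ => ⟨hgH, hhH, hx⟩) (fun ⟨d, hd, hd'⟩ => ⟨d, hd', hd⟩)
  rcases Nat.eq_zero_or_pos r with rfl | hr
  · obtain rfl : s = 1 := by simpa using hgcd
    exact (IsShift.mem_stabilizer_or_eq_one hmal hg hh (by omega)).imp id
      fun hg₁ => ⟨h, by rw [hg₁, pow_zero], (pow_one h).symm⟩
  · obtain ⟨hgH, hghH, hx⟩ | ⟨d, rfl, hd⟩ :=
      ih s (by omega) g (g⁻¹ * h) (t - r) r (s - r) (by rwa [Nat.gcd_sub_self_right hrs])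
        (by omega) (IsShift.mono hg (by omega)) (IsShift.inv_mul hg hh hrs (by omega)) (by omega)
    · have hhH : h ∈ stabilizer G (x 0) := by simpa using mul_mem hgH hghH
      exact .inl ⟨hgH, hhH, IsShift.forall_eq_of_forall_eq hg hgH (by omega) hx⟩
    · refine .inr ⟨d, rfl, ?_⟩
      rw [← mul_inv_cancel_left (d ^ r) h, hd, ← pow_add, Nat.add_sub_cancel' hrs]
end

section
/- Let G be a group and let g ∈ G be an element of infinite order whose centralizer C_G(g) is a cyclic subgroup. If g is conjugate to g⁻¹ in G, then g is the product of two involutions, i.e. there exist u, v ∈ G with u² = v² = 1 and g = u·v. -/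
/-!
The centralizer `C` of `g` is cyclic and contains the element `g` of infinite order, so `C ≅ ℤ`
is torsion-free. If `x⁻¹ g x = g⁻¹`, conjugation by `x` normalizes `C` and restricts to an
automorphism of `C` inverting `g`; an endomorphism of a torsion-free cyclic group inverting one
nontrivial element inverts all of it. Now `x² ∈ C` is fixed by conjugation by `x`, so it equals its
own inverse and hence `x² = 1`. Then `g = x · (x g)` is a product of two involutions.
-/

open Subgroup

theorem IsCyclic.isMulTorsionFree_of_not_isOfFinOrder {H : Type*} [Group H] [IsCyclic H]
    {a : H} (ha : ¬IsOfFinOrder a) : IsMulTorsionFree H :=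
  haveI : Infinite (zpowers a) := (infinite_zpowers.mpr ha).to_subtype
  haveI : Infinite H := Infinite.of_injective ((↑) : zpowers a → H) Subtype.val_injective
  intCyclicMulEquiv.symm.injective.isMulTorsionFree intCyclicMulEquiv.symm.toMonoidHom

theorem IsCyclic.map_eq_inv_of_map_eq_inv {H : Type*} [Group H] [IsCyclic H] [IsMulTorsionFree H]
    (f : H →* H) {a : H} (ha : a ≠ 1) (hfa : f a = a⁻¹) (b : H) : f b = b⁻¹ := by
  obtain ⟨c, hc⟩ := IsCyclic.exists_generator (α := H)
  obtain ⟨n, rfl⟩ := mem_zpowers_iff.mp (hc a)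
  obtain ⟨k, rfl⟩ := mem_zpowers_iff.mp (hc b)
  have hn : n ≠ 0 := by rintro rfl; exact ha (zpow_zero c)
  refine (zpow_left_inj hn).mp ?_
  calc f (c ^ k) ^ n = f (c ^ n) ^ k := by simp only [← map_zpow, ← zpow_mul, mul_comm]
    _ = (c ^ k)⁻¹ ^ n := by simp only [hfa, ← zpow_neg, ← zpow_mul, mul_neg, mul_comm]

section ConjEqInv

variable {G : Type*} [Group G] {g x : G}

theorem conj_inv_eq_of_conj_eq_inv (h : x⁻¹ * g * x = g⁻¹) : x⁻¹ * g⁻¹ * x = g := by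
  simpa [mul_assoc] using congrArg (·⁻¹) h

theorem mem_normalizer_centralizer_of_conj_eq_inv (h : x⁻¹ * g * x = g⁻¹) :
    x ∈ normalizer (centralizer {g} : Set G) := by
  refine mem_normalizer_iff''.mpr fun b ↦ ?_
  simp only [mem_centralizer_singleton_iff, ← commute_iff_eq]
  rw [← Commute.inv_right_iff, ← Commute.conj_iff x⁻¹, inv_inv, conj_inv_eq_of_conj_eq_inv h]

theorem sq_mem_centralizer_of_conj_eq_inv (h : x⁻¹ * g * x = g⁻¹) :
    x ^ 2 ∈ centralizer {g} := by
  have hconj : (x ^ 2)⁻¹ * (g * x ^ 2) = g :=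
    calc (x ^ 2)⁻¹ * (g * x ^ 2)
      _ = x⁻¹ * (x⁻¹ * g * x) * x := by simp only [sq, mul_inv_rev, mul_assoc]
      _ = g := by rw [h, conj_inv_eq_of_conj_eq_inv h]
  exact mem_centralizer_singleton_iff.mpr (inv_mul_eq_iff_eq_mul.mp hconj).symm

theorem exists_involutions_eq_mul_of_conj_eq_inv (hx : x ^ 2 = 1) (h : x⁻¹ * g * x = g⁻¹) :
    ∃ u v : G, u ^ 2 = 1 ∧ v ^ 2 = 1 ∧ g = u * v := by
  have hxinv : x⁻¹ = x := inv_eq_of_mul_eq_one_right (by rw [← sq, hx])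
  refine ⟨x, x * g, hx, ?_, by rw [← mul_assoc, ← sq, hx, one_mul]⟩
  calc (x * g) ^ 2 = x⁻¹ * g * x * g := by rw [hxinv, sq, ← mul_assoc]
    _ = 1 := by rw [h, inv_mul_cancel]

end ConjEqInv

/-- If `g` is an element of infinite order of a group `G` whose centralizer is cyclic, and
`g` is conjugate to `g⁻¹`, then `g` is the product of two involutions. -/
theorem conjugate_to_inverse_is_product_of_involutions {G : Type*} [Group G] (g : G)
    (hinf : ∀ k : ℤ, k ≠ 0 → g ^ k ≠ 1)
    (hcyc : IsCyclic (Subgroup.centralizer {g} : Subgroup G))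
    (hconj : ∃ x : G, x⁻¹ * g * x = g⁻¹) :
    ∃ u v : G, u ^ 2 = 1 ∧ v ^ 2 = 1 ∧ g = u * v := by
  obtain ⟨x, hx⟩ := hconj
  set C := centralizer {g}
  let g' : C := ⟨g, mem_centralizer_singleton_iff.mpr rfl⟩
  have hg' : ¬IsOfFinOrder g' := fun hfin ↦ by
    obtain ⟨k, hk, hgk⟩ := isOfFinOrder_iff_zpow_eq_one.mp hfin
    exact hinf k hk (congrArg Subtype.val hgk)
  have := hcyc.isMulTorsionFree_of_not_isOfFinOrder hg'
  let φ : C →* C :=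
    (C.normalizerMonoidHom ⟨x⁻¹, inv_mem (mem_normalizer_centralizer_of_conj_eq_inv hx)⟩).toMonoidHom
  have hφ : ∀ b, φ b = b⁻¹ := IsCyclic.map_eq_inv_of_map_eq_inv φ (a := g')
    (fun h ↦ hg' (h ▸ IsOfFinOrder.one)) (Subtype.ext (by simpa [φ] using hx))
  let x2 : C := ⟨x ^ 2, sq_mem_centralizer_of_conj_eq_inv hx⟩
  have hx2 : x2 = 1 := self_eq_inv.mp <| by
    rw [← hφ]; ext; simp [φ, x2, sq]
  exact exists_involutions_eq_mul_of_conj_eq_inv (congrArg Subtype.val hx2) hx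
end

section
/- Let G be a group and let g_0 ∈ G be an element of infinite order that is not a proper power, and suppose that every h ∈ G satisfying h⁻¹ g_0^k h = g_0^l for some integers k, l > 0 belongs to the cyclic subgroup ⟨g_0⟩. If g_0^t = g_1^s for some integers t, s ≥ 1 and some g_1 ∈ G that is not a proper power, then g_1 = g_0 (and t = s); in particular, g = g_0^t has a unique non-power root. -/
/-!
An element `g₁` commutes with its own power `g₁ ^ s = g₀ ^ t`, so it conjugates a positive power
of `g₀` to itself and therefore lies in `⟨g₀⟩`, say `g₁ = g₀ ^ m`. Since `g₀` has infinite order,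
`g₀ ^ t = g₀ ^ (m * s)` forces `t = m * s`, hence `m ≥ 1`; and `m ≥ 2` would make `g₁` a proper
power, so `m = 1`.
-/

/-- An element of a group is a proper power if it equals `x ^ k` for some element `x` and
some integer `k ≥ 2`. -/
def IsProperPower {G : Type*} [Group G] (g : G) : Prop :=
  ∃ x : G, ∃ k : ℕ, 2 ≤ k ∧ x ^ k = g

section

variable {G : Type*} [Group G]

lemma isProperPower_zpow (x : G) {m : ℤ} (hm : 2 ≤ m) : IsProperPower (x ^ m) :=
  ⟨x, m.toNat, by omega, by rw [← zpow_natCast, Int.toNat_of_nonneg (by omega)]⟩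

lemma eq_one_of_zpow_not_isProperPower {x : G} {m : ℤ} (hm : 1 ≤ m)
    (hx : ¬ IsProperPower (x ^ m)) : m = 1 := by
  by_contra hne
  exact hx (isProperPower_zpow x (by omega))

lemma exponent_eq_mul_of_zpow_eq {g : G} (hg : ¬ IsOfFinOrder g) {t m s : ℤ}
    (h : g ^ t = (g ^ m) ^ s) : t = m * s :=
  injective_zpow_iff_not_isOfFinOrder.2 hg <| by simp only [h, zpow_mul]

end

theorem unique_nonpower_root_general {G : Type*} [Group G] (g₀ : G)
    (hinf : ∀ k : ℤ, k ≠ 0 → g₀ ^ k ≠ 1)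
    (hconj : ∀ h : G, (∃ k l : ℤ, 0 < k ∧ 0 < l ∧ h⁻¹ * g₀ ^ k * h = g₀ ^ l) →
      h ∈ Subgroup.zpowers g₀)
    (t s : ℤ) (ht : 1 ≤ t) (hs : 1 ≤ s) (g₁ : G)
    (hg₁ : ¬ IsProperPower g₁) (heq : g₀ ^ t = g₁ ^ s) :
    g₁ = g₀ ∧ t = s := by
  have hg₀ : ¬ IsOfFinOrder g₀ := fun h ↦
    let ⟨k, hk, hk1⟩ := isOfFinOrder_iff_zpow_eq_one.1 h; hinf k hk hk1
  obtain ⟨m, rfl⟩ : ∃ m : ℤ, g₀ ^ m = g₁ :=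
    Subgroup.mem_zpowers_iff.1 <| hconj g₁ ⟨t, t, by omega, by omega, by rw [heq]; group⟩
  have hts : t = m * s := exponent_eq_mul_of_zpow_eq hg₀ heq
  have hm : 1 ≤ m := by nlinarith
  obtain rfl : m = 1 := eq_one_of_zpow_not_isProperPower hm hg₁
  exact ⟨zpow_one g₀, by omega⟩

/-- Let `g₀` be a non-power element of infinite order such that every `h` conjugating some
positive power of `g₀` to a positive power of `g₀` lies in `⟨g₀⟩`.  If `g₀ ^ t = g₁ ^ s` with
`t, s ≥ 1` and `g₁` a non-power, then `g₁ = g₀` and `t = s`; in particular `g₀ ^ t` has a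
unique non-power root. -/
theorem unique_nonpower_root {G : Type*} [Group G] (g₀ : G)
    (hinf : ∀ k : ℤ, k ≠ 0 → g₀ ^ k ≠ 1)
    (hnp : ¬ IsProperPower g₀)
    (hconj : ∀ h : G, (∃ k l : ℤ, 0 < k ∧ 0 < l ∧ h⁻¹ * g₀ ^ k * h = g₀ ^ l) →
      h ∈ Subgroup.zpowers g₀)
    (t s : ℤ) (ht : 1 ≤ t) (hs : 1 ≤ s) (g₁ : G)
    (hg₁ : ¬ IsProperPower g₁) (heq : g₀ ^ t = g₁ ^ s) :
    g₁ = g₀ ∧ t = s :=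
  unique_nonpower_root_general g₀ hinf hconj t s ht hs g₁ hg₁ heq
end
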